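/- Let g be the morphism on {0,1,2,3}* defined by g(0)=01, g(1)=2, g(2)=031, g(3)=3, and let w = g^ω(0) be its fixed point starting with 0. Then the set of reversible factors of w (factors u such that both u and reverse(u) are factors of w) is exactly the set of factors of the words 303, 323, 03130, and 31013. In particular, w has no reversible factor of length 6 or more. -/

import Mathlib

def IsFactorOf {α : Type*} (u : List α) (w : ℕ → α) : Prop :=
  ∃ i : ℕ, u = (List.range u.length).map fun k => w (i + k)

/-- The morphism g = 01/2/031/3. -/
def g : ℕ → List ℕ
  | 0 => [0, 1]
  | 1 => [2]
  | 2 => [0, 3, 1]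
  | _ => [3]

def IsPrefixOf (l : List ℕ) (w : ℕ → ℕ) : Prop :=
  ∀ i, i < l.length → l[i]? = some (w i)

/-- w is the infinite fixed point g^ω(0): every iterate g^n(0) is a prefix of w. -/
def IsFixedPointG (w : ℕ → ℕ) : Prop :=
  ∀ n : ℕ, IsPrefixOf ((fun l => l.flatMap g)^[n] [0]) w

/-!
Since `g` is non-erasing, a factor of length at most `n` of `g(x)` already occurs in `g(v)` for
some factor `v` of `x` of length at most `n`: either it lies inside the image of one letter, or it
starts inside the image of a letter and then needs the images of at most `n - 1` further letters.
Hence, once the factors of length at most 6 of `g⁹(0)` are checked to be closed under this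
operation, they are all the factors of length at most 6 of `w`. Among them, a finite check shows
that the reversible ones are exactly the factors of the palindromes 303, 323, 03130 and 31013.
None of these has length 6, and a reversible factor of length at least 6 would have a
reversible prefix of length 6.
-/
namespace List

variable {α : Type*}

def infixes (l : List α) : List (List α) := l.tails.flatMap inits

theorem mem_infixes {u l : List α} : u ∈ l.infixes ↔ u <:+: l := by
  simp only [infixes, mem_flatMap, mem_tails, mem_inits, infix_iff_prefix_suffix]
  exact exists_congr fun _ => and_comm

def shortInfixes (n : ℕ) (l : List α) : List (List α) := l.infixes.filter (·.length ≤ n)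

theorem mem_shortInfixes {n : ℕ} {u l : List α} :
    u ∈ l.shortInfixes n ↔ u <:+: l ∧ u.length ≤ n := by
  simp [shortInfixes, mem_infixes]

end List

section Morphism

open List

variable {α : Type*} {φ : α → List α}

theorem List.length_le_length_flatMap (hφ : ∀ a, φ a ≠ []) (l : List α) :
    l.length ≤ (l.flatMap φ).length := by
  induction l with
  | nil => simp
  | cons a l ih =>
    have := length_pos_iff.2 (hφ a)
    simp only [flatMap_cons, length_append, length_cons]
    omega

theorem List.IsPrefix.flatMap_take (hφ : ∀ a, φ a ≠ []) {u l : List α} {m : ℕ}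
    (h : u <+: l.flatMap φ) (hm : u.length ≤ m) : u <+: (l.take m).flatMap φ := by
  rcases le_or_gt l.length m with hl | hl
  · rwa [take_of_length_le hl]
  · have hpre : (l.take m).flatMap φ <+: l.flatMap φ := by
      conv_rhs => rw [← take_append_drop m l, flatMap_append]
      exact prefix_append _ _
    have hlen := length_le_length_flatMap hφ (l.take m)
    rw [length_take] at hlen
    exact prefix_of_prefix_length_le h hpre (by omega)

theorem List.exists_short_infix_of_infix_flatMap (hφ : ∀ a, φ a ≠ []) {n : ℕ} :
    ∀ {l u : List α}, u <:+: l.flatMap φ → u.length ≤ n →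
      ∃ v, v <:+: l ∧ v.length ≤ n ∧ u <:+: v.flatMap φ
  | [], u, h, _ => ⟨[], infix_rfl, by simp, by simpa using h⟩
  | a :: l, u, h, hu => by
    rw [flatMap_cons, infix_append_iff_ne_nil] at h
    rcases h with h | h | ⟨u₁, u₂, hu₁, -, rfl, hsuf, hpre⟩
    · obtain rfl | hne := eq_or_ne u []
      · exact ⟨[], nil_infix, by simp, nil_infix⟩
      have := length_pos_iff.2 hne
      exact ⟨[a], IsPrefix.isInfix ⟨l, rfl⟩, by simp; omega, by simpa using h⟩
    · obtain ⟨v, hv, hvn, huv⟩ := exists_short_infix_of_infix_flatMap hφ h hu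
      exact ⟨v, infix_cons hv, hvn, huv⟩
    · have := length_pos_iff.2 hu₁
      rw [length_append] at hu
      refine ⟨a :: l.take (n - 1), (prefix_cons_inj a |>.2 (take_prefix _ l)).isInfix,
        by simp; omega, ?_⟩
      rw [flatMap_cons]
      exact infix_append_iff.2 <| .inr <| .inr
        ⟨u₁, u₂, rfl, hsuf, hpre.flatMap_take hφ (by omega)⟩

theorem List.infix_of_infix_iterate_flatMap (hφ : ∀ a, φ a ≠ []) {n : ℕ} {s t : List α}
    (hs : ∀ u, u <:+: s → u.length ≤ n → u <:+: t)
    (ht : ∀ v, v <:+: t → v.length ≤ n → ∀ u, u <:+: v.flatMap φ → u.length ≤ n → u <:+: t) :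
    ∀ k u, u <:+: (fun l => l.flatMap φ)^[k] s → u.length ≤ n → u <:+: t
  | 0, u, hu, hun => hs u hu hun
  | k + 1, u, hu, hun => by
    rw [Function.iterate_succ_apply'] at hu
    obtain ⟨v, hv, hvn, huv⟩ := exists_short_infix_of_infix_flatMap hφ hu hun
    exact ht v (infix_of_infix_iterate_flatMap hφ hs ht k v hv hvn) hvn u huv hun

end Morphism

section Sequence

open List

variable {α : Type*} {w : ℕ → α}

theorem isFactorOf_iff_exists_infix_map_range {u : List α} :
    IsFactorOf u w ↔ ∃ N, u <:+: (range N).map w := by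
  constructor
  · rintro ⟨i, hi⟩
    refine ⟨i + u.length, (range i).map w, [], ?_⟩
    rw [range_add, map_append, map_map, append_nil, hi, length_map, length_range]
    rfl
  · rintro ⟨N, hu⟩
    obtain ⟨i, hlen, hi⟩ := infix_iff_getElem?.1 hu
    rw [length_map, length_range] at hlen
    refine ⟨i, ext_getElem (by simp) fun k hk _ => ?_⟩
    have := hi k hk
    rw [getElem?_map, getElem?_range (by omega), Option.map_some, Option.some_inj] at this
    simp [← this, Nat.add_comm]

theorem IsFactorOf.of_infix {u v : List α} (hv : IsFactorOf v w) (huv : u <:+: v) :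
    IsFactorOf u w := by
  obtain ⟨N, hvN⟩ := isFactorOf_iff_exists_infix_map_range.1 hv
  exact isFactorOf_iff_exists_infix_map_range.2 ⟨N, huv.trans hvN⟩

theorem IsPrefixOf.eq_map_range {l : List ℕ} {w : ℕ → ℕ} (h : IsPrefixOf l w) :
    l = (range l.length).map w := by
  refine ext_getElem? fun i => ?_
  rcases lt_or_ge i l.length with hi | hi
  · rw [h i hi, getElem?_map, getElem?_range hi, Option.map_some]
  · rw [getElem?_eq_none hi, getElem?_eq_none (by simpa using hi)]

theorem IsFactorOf.and_reverse_of_infix_of_reverse_eq {p u : List α}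
    (hp : IsFactorOf p w) (hpal : p.reverse = p) (hu : u <:+: p) :
    IsFactorOf u w ∧ IsFactorOf u.reverse w :=
  ⟨hp.of_infix hu, hp.of_infix (hpal ▸ reverse_infix.2 hu)⟩

end Sequence

section FixedPoint

open List

def gIter (n : ℕ) : List ℕ := (fun l => l.flatMap g)^[n] [0]

theorem g_ne_nil (a : ℕ) : g a ≠ [] := by
  unfold g; split <;> simp

theorem gIter_succ (n : ℕ) : gIter (n + 1) = (gIter n).flatMap g :=
  Function.iterate_succ_apply' _ _ _

theorem exists_gIter_eq_zero_cons (n : ℕ) : ∃ t, gIter n = 0 :: t := by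
  induction n with
  | zero => exact ⟨[], rfl⟩
  | succ n ih =>
    obtain ⟨t, ht⟩ := ih
    exact ⟨1 :: t.flatMap g, by rw [gIter_succ, ht]; rfl⟩

theorem lt_length_gIter (n : ℕ) : n < (gIter n).length := by
  induction n with
  | zero => simp [gIter]
  | succ n ih =>
    obtain ⟨t, ht⟩ := exists_gIter_eq_zero_cons n
    have := length_le_length_flatMap g_ne_nil t
    rw [ht] at ih
    rw [gIter_succ, ht, flatMap_cons]
    simp only [g, length_append, length_cons] at ih ⊢
    omega

variable {w : ℕ → ℕ}

theorem IsFixedPointG.isPrefixOf_gIter (hw : IsFixedPointG w) (n : ℕ) : IsPrefixOf (gIter n) w :=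
  hw n

theorem isFactorOf_iff_exists_infix_gIter (hw : IsFixedPointG w) {u : List ℕ} :
    IsFactorOf u w ↔ ∃ n, u <:+: gIter n := by
  rw [isFactorOf_iff_exists_infix_map_range]
  constructor
  · rintro ⟨N, hN⟩
    refine ⟨N, hN.trans ?_⟩
    have := (take_prefix N ((range (gIter N).length).map w)).isInfix
    rwa [← map_take, take_range, min_eq_left (lt_length_gIter N).le,
      ← (hw.isPrefixOf_gIter N).eq_map_range] at this
  · rintro ⟨n, hn⟩
    exact ⟨_, (hw.isPrefixOf_gIter n).eq_map_range ▸ hn⟩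

set_option maxRecDepth 20000 in
theorem shortInfixes_gIter_nine_closed :
    ∀ v ∈ (gIter 9).shortInfixes 6, ∀ u ∈ (v.flatMap g).shortInfixes 6,
      u ∈ (gIter 9).shortInfixes 6 := by
  decide

theorem infix_gIter_nine_of_infix_gIter {n : ℕ} {u : List ℕ} (hu : u <:+: gIter n)
    (hu6 : u.length ≤ 6) : u <:+: gIter 9 := by
  refine infix_of_infix_iterate_flatMap g_ne_nil (fun v hv _ => hv.trans ?_)
    (fun v hv hv6 u hu hu6 => ?_) n u hu hu6
  · obtain ⟨t, ht⟩ := exists_gIter_eq_zero_cons 9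
    exact ht ▸ IsPrefix.isInfix ⟨t, rfl⟩
  · exact (mem_shortInfixes.1 (shortInfixes_gIter_nine_closed v (mem_shortInfixes.2 ⟨hv, hv6⟩) u
      (mem_shortInfixes.2 ⟨hu, hu6⟩))).1

theorem isFactorOf_iff_infix_gIter_nine (hw : IsFixedPointG w) {u : List ℕ}
    (hu : u.length ≤ 6) : IsFactorOf u w ↔ u <:+: gIter 9 := by
  rw [isFactorOf_iff_exists_infix_gIter hw]
  exact ⟨fun ⟨_, hn⟩ => infix_gIter_nine_of_infix_gIter hn hu, fun h => ⟨9, h⟩⟩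

set_option maxRecDepth 20000 in
theorem infix_palindrome_of_reverse_infix_gIter_nine :
    ∀ u ∈ (gIter 9).shortInfixes 6, u.reverse <:+: gIter 9 →
      u <:+: [3,0,3] ∨ u <:+: [3,2,3] ∨ u <:+: [0,3,1,3,0] ∨ u <:+: [3,1,0,1,3] := by
  decide

end FixedPoint

/-- The reversible factors of g^ω(0) are exactly the factors of 303, 323, 03130,
31013; in particular there is no reversible factor of length ≥ 6. -/
theorem reversible_factors_of_g_fixed_point (w : ℕ → ℕ) (hw : IsFixedPointG w) :
    (∀ u : List ℕ, (IsFactorOf u w ∧ IsFactorOf u.reverse w) ↔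
      (u <:+: [3,0,3] ∨ u <:+: [3,2,3] ∨ u <:+: [0,3,1,3,0] ∨ u <:+: [3,1,0,1,3])) ∧
    (∀ u : List ℕ, 6 ≤ u.length → ¬ (IsFactorOf u w ∧ IsFactorOf u.reverse w)) := by
  have length_le_five {u : List ℕ}
      (h : u <:+: [3,0,3] ∨ u <:+: [3,2,3] ∨ u <:+: [0,3,1,3,0] ∨ u <:+: [3,1,0,1,3]) :
      u.length ≤ 5 := by
    rcases h with h | h | h | h <;> exact h.length_le.trans (by simp)
  have classify (u : List ℕ) (h : IsFactorOf u w ∧ IsFactorOf u.reverse w) :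
      u <:+: [3,0,3] ∨ u <:+: [3,2,3] ∨ u <:+: [0,3,1,3,0] ∨ u <:+: [3,1,0,1,3] := by
    have hv : (u.take 6).length ≤ 6 := List.length_take_le _ _
    have hrev : (u.take 6).reverse.length ≤ 6 := by simp
    have htake := (List.take_prefix 6 u).isInfix
    have key := infix_palindrome_of_reverse_infix_gIter_nine _
      (List.mem_shortInfixes.2
        ⟨(isFactorOf_iff_infix_gIter_nine hw hv).1 (h.1.of_infix htake), hv⟩)
      ((isFactorOf_iff_infix_gIter_nine hw hrev).1 (h.2.of_infix (List.reverse_infix.2 htake)))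
    have := length_le_five key
    rwa [List.take_of_length_le (by simp at this; omega)] at key
  refine ⟨fun u => ⟨classify u, ?_⟩, fun u hu h => ?_⟩
  · rintro (h | h | h | h) <;>
      exact ((isFactorOf_iff_infix_gIter_nine hw (by simp)).2 (by decide)
        ).and_reverse_of_infix_of_reverse_eq rfl h
  · have := length_le_five (classify u h)
    omega
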